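/- If Γ is a simple digraph with a zero forcing set B such that th(Γ;B) ≤ t, setting a = |B| and b = t − a, then Γ is a minor of H_{a,b+1} obtainable by contracting path arcs and deleting non-path arcs; conversely, if Γ is obtained from some H_{a,b+1} with a + b = t by contracting path arcs and deleting non-path arcs, then th(Γ) ≤ t. -/

import Mathlib

open Set

/-- One time step of standard zero forcing on a digraph with arc relation `A`:
every blue vertex having a unique white out-neighbor forces it blue. -/
def dstep {V : Type*} (A : V → V → Prop) (S : Set V) : Set V :=
  S ∪ {w | ∃ u ∈ S, A u w ∧ ∀ x, A u x → x ∉ S → x = w}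

/-- `B` is a zero forcing set of the digraph with arc relation `A`. -/
def IsZFS {V : Type*} (A : V → V → Prop) (B : Set V) : Prop :=
  ∃ t, (dstep A)^[t] B = Set.univ

/-- Propagation time of `B` in the digraph with arc relation `A`. -/
noncomputable def dpt {V : Type*} (A : V → V → Prop) (B : Set V) : ℕ :=
  sInf {t | (dstep A)^[t] B = Set.univ}

/-- The throttling number of the digraph with arc relation `A`. -/
noncomputable def dth {V : Type*} (A : V → V → Prop) : ℕ :=
  sInf {k | ∃ B : Set V, IsZFS A B ∧ k = B.ncard + dpt A B}

/-- The arcs of the host digraph `H_{a,b+1}`: all arcs between distinct vertices of the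
`a × (b+1)` array except forward diagonal arcs and forward horizontal arcs skipping a
column. -/
def HArc (a b : ℕ) (p q : Fin a × Fin (b + 1)) : Prop :=
  p ≠ q ∧ ((q.2 : ℕ) ≤ (p.2 : ℕ) ∨ (p.1 = q.1 ∧ (q.2 : ℕ) = (p.2 : ℕ) + 1))

/-- Path arcs of `H_{a,b+1}`. -/
def IsPathArc {a b : ℕ} (p q : Fin a × Fin (b + 1)) : Prop :=
  p.1 = q.1 ∧ (q.2 : ℕ) = (p.2 : ℕ) + 1

/-- `Γ` (with arc relation `A`) can be obtained from `H_{a,b+1}` by contracting path arcs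
and deleting non-path arcs.  The map `φ` collapses each contracted horizontal segment of a
row to a single vertex of `Γ`. -/
def ObtainedFromH {V : Type*} (A : V → V → Prop) (a b : ℕ) : Prop :=
  ∃ φ : Fin a × Fin (b + 1) → V,
    Function.Surjective φ ∧
    (∀ p q, φ p = φ q → p.1 = q.1) ∧
    (∀ p q r, φ p = φ q → r.1 = p.1 → (p.2 : ℕ) ≤ (r.2 : ℕ) → (r.2 : ℕ) ≤ (q.2 : ℕ) →
      φ r = φ p) ∧
    (∀ x y, A x y → ∃ p q, φ p = x ∧ φ q = y ∧ φ p ≠ φ q ∧ HArc a b p q) ∧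
    (∀ p q, IsPathArc p q → φ p = φ q ∨ A (φ p) (φ q))

/-!
Let `B` be a zero forcing set that turns every vertex blue within `b` steps. Choosing for each
vertex outside `B` a vertex that forced it gives an injective map, so the vertices split into
forcing chains, one starting at each vertex of `B`. Put the chain of the `i`-th vertex of `B` in
row `i`, column `j` showing the last vertex of the chain that is blue by time `j`. An arc `x → y`
then either ends at a vertex that is blue while `x` is still shown, which gives a vertical or
backward arc of `H_{|B|,b+1}`, or `y` is the vertex forced by `x`, which gives a path arc.

Conversely, if `Γ` is a contraction of `H_{a,b+1}`, the image of the first column is a zero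
forcing set that colours the image of the first `j + 1` columns within `j` steps: a cell's only
arc into a later column is its path arc.
-/

theorem Nat.exists_between_and_not_succ {P : ℕ → Prop} {j k : ℕ} (hjk : j ≤ k) (hj : P j)
    (hk : ¬P k) : ∃ m, j ≤ m ∧ m < k ∧ P m ∧ ¬P (m + 1) := by
  induction k, hjk using Nat.le_induction with
  | base => exact absurd hj hk
  | succ k hjk ih =>
    by_cases hPk : P k
    · exact ⟨k, hjk, k.lt_succ_self, hPk, hk⟩
    · obtain ⟨m, hjm, hmk, hm⟩ := ih hPk
      exact ⟨m, hjm, hmk.trans k.lt_succ_self, hm⟩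

section ZeroForcing

variable {V : Type*} {A : V → V → Prop} {B S T : Set V}

def Forces (A : V → V → Prop) (S : Set V) (u v : V) : Prop :=
  u ∈ S ∧ A u v ∧ ∀ x, A u x → x ∉ S → x = v

theorem mem_dstep {w : V} : w ∈ dstep A S ↔ w ∈ S ∨ ∃ u, Forces A S u w := Iff.rfl

theorem subset_dstep : S ⊆ dstep A S := Set.subset_union_left

theorem dstep_mono (h : S ⊆ T) : dstep A S ⊆ dstep A T := by
  rintro w (hw | ⟨u, hu, huw, huniq⟩)
  · exact Or.inl (h hw)
  · exact Or.inr ⟨u, h hu, huw, fun x hux hxT => huniq x hux fun hxS => hxT (h hxS)⟩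

theorem monotone_iterate_dstep : Monotone fun j => (dstep A)^[j] B :=
  monotone_nat_of_le_succ fun j => by
    simpa only [Function.iterate_succ_apply'] using subset_dstep

theorem iterate_dpt (hZ : IsZFS A B) : (dstep A)^[dpt A B] B = Set.univ := Nat.sInf_mem hZ

theorem iterate_eq_univ_of_dpt_le (hZ : IsZFS A B) {b : ℕ} (hb : dpt A B ≤ b) :
    (dstep A)^[b] B = Set.univ :=
  Set.eq_univ_of_univ_subset (iterate_dpt hZ ▸ monotone_iterate_dstep hb)

theorem dth_le_ncard_add_dpt (hZ : IsZFS A B) : dth A ≤ B.ncard + dpt A B :=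
  Nat.sInf_le ⟨B, hZ, rfl⟩

variable (A B) in
noncomputable def blueTime (v : V) : ℕ := sInf {j | v ∈ (dstep A)^[j] B}

theorem mem_iterate_dstep_iff (hZ : IsZFS A B) {v : V} {j : ℕ} :
    v ∈ (dstep A)^[j] B ↔ blueTime A B v ≤ j := by
  refine ⟨fun h => Nat.sInf_le h, fun h => monotone_iterate_dstep h ?_⟩
  obtain ⟨t, ht⟩ := hZ
  exact Nat.sInf_mem (s := {j | v ∈ (dstep A)^[j] B}) ⟨t, by simp [ht]⟩

theorem blueTime_eq_zero_iff (hZ : IsZFS A B) {v : V} : blueTime A B v = 0 ↔ v ∈ B := by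
  rw [← Nat.le_zero, ← mem_iterate_dstep_iff hZ, Function.iterate_zero_apply]

theorem blueTime_le {b : ℕ} (hb : (dstep A)^[b] B = Set.univ) (v : V) : blueTime A B v ≤ b :=
  (mem_iterate_dstep_iff ⟨b, hb⟩).1 (hb ▸ Set.mem_univ v)

variable (A B) in
open Classical in
/-- For `v ∉ B`, a vertex forcing `v` in the step that turns `v` blue; junk for `v ∈ B`. -/
noncomputable def forcer (v : V) : V :=
  if h : ∃ u, Forces A ((dstep A)^[blueTime A B v - 1] B) u v then h.choose else v

theorem forces_forcer (hZ : IsZFS A B) {v : V} (hv : v ∉ B) :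
    Forces A ((dstep A)^[blueTime A B v - 1] B) (forcer A B v) v := by
  have hpos : 0 < blueTime A B v := Nat.pos_of_ne_zero ((blueTime_eq_zero_iff hZ).not.2 hv)
  have hnot : v ∉ (dstep A)^[blueTime A B v - 1] B := by
    rw [mem_iterate_dstep_iff hZ]; omega
  have hmem : v ∈ dstep A ((dstep A)^[blueTime A B v - 1] B) := by
    rw [← Function.iterate_succ_apply' (dstep A), Nat.succ_eq_add_one,
      Nat.sub_add_cancel hpos, mem_iterate_dstep_iff hZ]
  have h : ∃ u, Forces A ((dstep A)^[blueTime A B v - 1] B) u v :=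
    (mem_dstep.1 hmem).resolve_left hnot
  rw [forcer, dif_pos h]
  exact h.choose_spec

theorem blueTime_forcer_lt (hZ : IsZFS A B) {v : V} (hv : v ∉ B) :
    blueTime A B (forcer A B v) < blueTime A B v := by
  have h := (mem_iterate_dstep_iff hZ).1 (forces_forcer hZ hv).1
  have hpos : 0 < blueTime A B v := Nat.pos_of_ne_zero ((blueTime_eq_zero_iff hZ).not.2 hv)
  omega

theorem forcer_injOn (hZ : IsZFS A B) : Set.InjOn (forcer A B) Bᶜ := by
  intro v hv w hw h
  wlog hvw : blueTime A B v ≤ blueTime A B w generalizing v w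
  · exact (this hw hv h.symm (le_of_not_ge hvw)).symm
  have hwv := (forces_forcer hZ hv).2.2 w (h ▸ (forces_forcer hZ hw).2.1)
  refine (hwv ?_).symm
  rw [mem_iterate_dstep_iff hZ]
  have := blueTime_forcer_lt hZ hw
  omega

end ZeroForcing

section Chain

variable {V : Type*} {A : V → V → Prop} {B : Set V}

variable (A B) in
open Classical in
/-- The forcing chain started at `e`, sampled in time: `chain A B e j` is the last vertex of
the chain that is blue by time `j`. -/
noncomputable def chain (e : V) : ℕ → V
  | 0 => e
  | j + 1 =>
    if h : ∃ w, forcer A B w = chain e j ∧ w ∉ B ∧ blueTime A B w ≤ j + 1 then h.choose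
    else chain e j

theorem chain_succ_spec {e : V} {j : ℕ}
    (h : ∃ w, forcer A B w = chain A B e j ∧ w ∉ B ∧ blueTime A B w ≤ j + 1) :
    forcer A B (chain A B e (j + 1)) = chain A B e j ∧ chain A B e (j + 1) ∉ B ∧
      blueTime A B (chain A B e (j + 1)) ≤ j + 1 := by
  rw [chain, dif_pos h]
  exact h.choose_spec

theorem chain_succ_eq_or (e : V) (j : ℕ) :
    chain A B e (j + 1) = chain A B e j ∨
      (forcer A B (chain A B e (j + 1)) = chain A B e j ∧ chain A B e (j + 1) ∉ B ∧
        blueTime A B (chain A B e (j + 1)) ≤ j + 1) := by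
  by_cases h : ∃ w, forcer A B w = chain A B e j ∧ w ∉ B ∧ blueTime A B w ≤ j + 1
  · exact Or.inr (chain_succ_spec h)
  · rw [chain, dif_neg h]
    exact Or.inl rfl

theorem blueTime_chain_lt_succ (hZ : IsZFS A B) {e : V} {j : ℕ}
    (h : chain A B e (j + 1) ≠ chain A B e j) :
    blueTime A B (chain A B e j) < blueTime A B (chain A B e (j + 1)) := by
  obtain ⟨hforcer, hnotB, -⟩ := (chain_succ_eq_or e j).resolve_left h
  exact hforcer ▸ blueTime_forcer_lt hZ hnotB

theorem monotone_blueTime_chain (hZ : IsZFS A B) (e : V) :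
    Monotone fun j => blueTime A B (chain A B e j) :=
  monotone_nat_of_le_succ fun j => by
    by_cases h : chain A B e (j + 1) = chain A B e j
    · exact (congrArg (blueTime A B) h).ge
    · exact (blueTime_chain_lt_succ hZ h).le

theorem chain_eq_of_blueTime_eq (hZ : IsZFS A B) {e : V} {j k : ℕ} (hjk : j ≤ k)
    (h : blueTime A B (chain A B e j) = blueTime A B (chain A B e k)) :
    chain A B e j = chain A B e k := by
  induction k, hjk using Nat.le_induction with
  | base => rfl
  | succ k hjk ih =>
    have h₁ := monotone_blueTime_chain hZ e hjk
    have h₂ := monotone_blueTime_chain hZ e (k.le_add_right 1)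
    rw [ih (by simp only at h₁ h₂; omega)]
    by_contra hne
    have := blueTime_chain_lt_succ hZ (Ne.symm hne)
    simp only at h₁ h₂
    omega

theorem chain_eq_of_le_of_le (hZ : IsZFS A B) {e : V} {i j k : ℕ} (hij : i ≤ j) (hjk : j ≤ k)
    (h : chain A B e i = chain A B e k) : chain A B e j = chain A B e i := by
  have h₁ := monotone_blueTime_chain hZ e hij
  have h₂ := monotone_blueTime_chain hZ e hjk
  have h₃ := congrArg (blueTime A B) h
  simp only at h₁ h₂
  exact (chain_eq_of_blueTime_eq hZ hij (by omega)).symm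

theorem chain_eq_self_of_mem (hZ : IsZFS A B) {e : V} (he : e ∈ B) {j : ℕ}
    (h : chain A B e j ∈ B) : chain A B e j = e :=
  (chain_eq_of_blueTime_eq hZ j.zero_le <| by
    rw [(blueTime_eq_zero_iff hZ).2 h]; exact (blueTime_eq_zero_iff hZ).2 he).symm

theorem exists_chain_eq_forcer {e : V} (he : e ∈ B) {j : ℕ} {v : V} (h : chain A B e j = v)
    (hv : v ∉ B) : ∃ m, chain A B e m = forcer A B v := by
  obtain ⟨m, -, -, hm, hm₁⟩ := Nat.exists_between_and_not_succ (P := (chain A B e · ≠ v))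
    j.zero_le (fun h₀ => hv (h₀ ▸ he)) (not_not.2 h)
  obtain ⟨hforcer, -⟩ := (chain_succ_eq_or e m).resolve_left fun h' => hm (h' ▸ not_not.1 hm₁)
  exact ⟨m, by rw [← not_not.1 hm₁, hforcer]⟩

theorem eq_of_chain_eq (hZ : IsZFS A B) {e e' : V} (he : e ∈ B) (he' : e' ∈ B) {j j' : ℕ}
    (h : chain A B e j = chain A B e' j') : e = e' := by
  induction hv : blueTime A B (chain A B e j) using Nat.strong_induction_on generalizing j j' with
  | _ n ih =>
    by_cases hB : chain A B e j ∈ B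
    · rw [← chain_eq_self_of_mem hZ he hB, ← chain_eq_self_of_mem hZ he' (h ▸ hB), h]
    · obtain ⟨m, hm⟩ := exists_chain_eq_forcer he rfl hB
      obtain ⟨m', hm'⟩ := exists_chain_eq_forcer he' h.symm (h ▸ hB)
      exact ih _ (hv ▸ hm ▸ blueTime_forcer_lt hZ hB) (hm.trans hm'.symm) rfl

theorem chain_eq_forcer_of_lt (hZ : IsZFS A B) {e v : V} {m₀ m : ℕ}
    (h₀ : chain A B e m₀ = forcer A B v) (hv : v ∉ B) (hm₀ : m₀ ≤ m) (hm : m < blueTime A B v) :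
    chain A B e m = forcer A B v := by
  induction m, hm₀ using Nat.le_induction with
  | base => exact h₀
  | succ m hm₀ ih =>
    rcases chain_succ_eq_or e m with h | ⟨hforcer, hnotB, hle⟩
    · rw [h, ih (by omega)]
    · have := forcer_injOn hZ hnotB hv (hforcer.trans (ih (by omega)))
      rw [this] at hle
      omega

theorem exists_chain_blueTime_eq (hZ : IsZFS A B) (v : V) :
    ∃ e ∈ B, chain A B e (blueTime A B v) = v := by
  induction hn : blueTime A B v using Nat.strong_induction_on generalizing v with
  | _ n ih =>
    by_cases hv : v ∈ B
    · exact ⟨v, hv, by rw [← hn, (blueTime_eq_zero_iff hZ).2 hv]; rfl⟩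
    have hlt := blueTime_forcer_lt hZ hv
    obtain ⟨e, he, hforcer⟩ := ih _ (hn ▸ hlt) (forcer A B v) rfl
    obtain ⟨k, rfl⟩ : ∃ k, n = k + 1 := Nat.exists_eq_succ_of_ne_zero (by omega)
    have hk : chain A B e k = forcer A B v :=
      chain_eq_forcer_of_lt hZ hforcer hv (by omega) (by omega)
    obtain ⟨hforcer', hnotB, -⟩ := chain_succ_spec ⟨v, hk.symm, hv, hn.le⟩
    exact ⟨e, he, forcer_injOn hZ hnotB hv (hforcer'.trans hk)⟩

theorem exists_chain_arc {b : ℕ} (hb : (dstep A)^[b] B = Set.univ) {x y : V} (hxy : A x y) :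
    ∃ e ∈ B, ∃ e' ∈ B, ∃ j j', j ≤ b ∧ j' ≤ b ∧ chain A B e j = x ∧ chain A B e' j' = y ∧
      (j' ≤ j ∨ e = e' ∧ j' = j + 1) := by
  have hZ : IsZFS A B := ⟨b, hb⟩
  obtain ⟨e, he, hx⟩ := exists_chain_blueTime_eq hZ x
  obtain ⟨e', he', hy⟩ := exists_chain_blueTime_eq hZ y
  have hxb := blueTime_le hb x
  have hyb := blueTime_le hb y
  rcases le_or_gt (blueTime A B y) (blueTime A B x) with hyx | hxy'
  · exact ⟨e, he, e', he', _, _, hxb, hyb, hx, hy, Or.inl hyx⟩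
  by_cases hstay : chain A B e (blueTime A B y) = x
  · exact ⟨e, he, e', he', _, _, hyb, hyb, hstay, hy, Or.inl le_rfl⟩
  -- `x` moves on along its chain before `y` is blue, by forcing `y` itself
  obtain ⟨m, -, hmy, hm, hm₁⟩ :=
    Nat.exists_between_and_not_succ (P := (chain A B e · = x)) hxy'.le hx hstay
  obtain ⟨hforcer, hnotB, hle⟩ :=
    (chain_succ_eq_or e m).resolve_left fun h => hm₁ (h.trans hm)
  have hyw : y = chain A B e (m + 1) := by
    refine (forces_forcer hZ hnotB).2.2 y (by rwa [hforcer, hm]) ?_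
    rw [mem_iterate_dstep_iff hZ]
    omega
  exact ⟨e, he, e, he, m, m + 1, by omega, by omega, hm, hyw.symm, Or.inr ⟨rfl, rfl⟩⟩

end Chain

section HContraction

variable {V : Type*} {A : V → V → Prop} {a b : ℕ}

structure IsHContraction (A : V → V → Prop) (φ : Fin a × Fin (b + 1) → V) : Prop where
  surjective : Function.Surjective φ
  row_eq : ∀ p q, φ p = φ q → p.1 = q.1
  eq_of_between : ∀ p q r, φ p = φ q → r.1 = p.1 → (p.2 : ℕ) ≤ (r.2 : ℕ) →
    (r.2 : ℕ) ≤ (q.2 : ℕ) → φ r = φ p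
  exists_hArc : ∀ x y, A x y → ∃ p q, φ p = x ∧ φ q = y ∧ φ p ≠ φ q ∧ HArc a b p q
  isPathArc : ∀ p q, IsPathArc p q → φ p = φ q ∨ A (φ p) (φ q)

theorem obtainedFromH_iff : ObtainedFromH A a b ↔ ∃ φ, IsHContraction (a := a) (b := b) A φ :=
  ⟨fun ⟨φ, h₁, h₂, h₃, h₄, h₅⟩ => ⟨φ, h₁, h₂, h₃, h₄, h₅⟩,
    fun ⟨φ, h₁, h₂, h₃, h₄, h₅⟩ => ⟨φ, h₁, h₂, h₃, h₄, h₅⟩⟩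

theorem isHContraction_chain (hirr : ∀ x, ¬A x x) {B : Set V} (e : Fin a ≃ B)
    (hb : (dstep A)^[b] B = Set.univ) :
    IsHContraction A fun p : Fin a × Fin (b + 1) => chain A B (e p.1) p.2 := by
  have hZ : IsZFS A B := ⟨b, hb⟩
  have row_eq (p q : Fin a × Fin (b + 1)) (h : chain A B (e p.1) p.2 = chain A B (e q.1) q.2) :
      p.1 = q.1 :=
    e.injective (Subtype.ext (eq_of_chain_eq hZ (e p.1).2 (e q.1).2 h))
  refine ⟨fun v => ?_, row_eq, fun p q r hpq hrp h₁ h₂ => ?_, fun x y hxy => ?_, ?_⟩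
  · obtain ⟨x, hx, hxv⟩ := exists_chain_blueTime_eq hZ v
    exact ⟨(e.symm ⟨x, hx⟩, ⟨_, Nat.lt_succ_of_le (blueTime_le hb v)⟩), by simpa using hxv⟩
  · rw [← row_eq p q hpq] at hpq
    rw [hrp]
    exact chain_eq_of_le_of_le hZ h₁ h₂ hpq
  · obtain ⟨x', hx', y', hy', j, j', hj, hj', hx, hy, hcol⟩ := exists_chain_arc hb hxy
    have hne : x ≠ y := fun h => hirr y (h ▸ hxy)
    refine ⟨(e.symm ⟨x', hx'⟩, ⟨j, Nat.lt_succ_of_le hj⟩),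
      (e.symm ⟨y', hy'⟩, ⟨j', Nat.lt_succ_of_le hj'⟩), by simpa using hx, by simpa using hy,
      by simpa [hx, hy] using hne, fun h => hne ?_, ?_⟩
    · simpa [hx, hy] using congrArg (fun p : Fin a × Fin (b + 1) => chain A B (e p.1) p.2) h
    · rcases hcol with hcol | ⟨rfl, hcol⟩
      · exact Or.inl hcol
      · exact Or.inr ⟨rfl, hcol⟩
  · rintro p q ⟨hrow, hcol⟩
    simp only [← hrow, hcol]
    refine (chain_succ_eq_or (e p.1 : V) p.2).imp Eq.symm fun h => ?_
    exact h.1 ▸ (forces_forcer hZ h.2.1).2.1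

variable {φ : Fin a × Fin (b + 1) → V}

theorem IsHContraction.forces_of_isPathArc (hφ : IsHContraction A φ) {p q : Fin a × Fin (b + 1)}
    (hpq : IsPathArc p q) (hq : φ q ∉ φ '' {r | (r.2 : ℕ) ≤ p.2}) :
    Forces A (φ '' {r | (r.2 : ℕ) ≤ p.2}) (φ p) (φ q) := by
  obtain ⟨hrow, hcol⟩ := hpq
  have hp : φ p ∈ φ '' {r | (r.2 : ℕ) ≤ p.2} := ⟨p, Set.mem_ofPred.2 le_rfl, rfl⟩
  refine ⟨hp, (hφ.isPathArc p q ⟨hrow, hcol⟩).resolve_left fun h => hq (h ▸ hp), ?_⟩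
  rintro _ hpx hx
  obtain ⟨p', q', hp', rfl, -, -, hH⟩ := hφ.exists_hArc _ _ hpx
  have hrow' : p'.1 = p.1 := hφ.row_eq p' p hp'
  -- otherwise `q` would lie between two cells collapsed to `φ p`
  have hp'col : (p'.2 : ℕ) ≤ p.2 := by
    by_contra h
    exact hq (hφ.eq_of_between p p' q hp'.symm hrow.symm (by omega) (by omega) ▸ hp)
  have hq'col : ¬(q'.2 : ℕ) ≤ p.2 := fun h => hx ⟨q', h, rfl⟩
  rcases hH with hle | ⟨hrow'', hcol''⟩
  · omega
  · exact congrArg φ (Prod.ext (by rw [← hrow'', hrow', hrow]) (Fin.ext (by omega)))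

theorem IsHContraction.image_subset_iterate_dstep (hφ : IsHContraction A φ) (j : ℕ) :
    φ '' {p | (p.2 : ℕ) ≤ j} ⊆ (dstep A)^[j] (Set.range fun i => φ (i, 0)) := by
  induction j with
  | zero =>
    rintro _ ⟨p, hp, rfl⟩
    exact ⟨p.1, congrArg φ (Prod.ext rfl (Fin.ext (Nat.le_zero.1 hp).symm))⟩
  | succ j ih =>
    rw [Function.iterate_succ_apply']
    refine subset_trans ?_ (dstep_mono ih)
    rintro _ ⟨q, hq, rfl⟩
    by_cases hqj : φ q ∈ φ '' {p | (p.2 : ℕ) ≤ j}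
    · exact Or.inl hqj
    have hcol : (q.2 : ℕ) = j + 1 := by
      by_contra h
      exact hqj ⟨q, by simp only [Set.mem_ofPred_eq] at hq ⊢; omega, rfl⟩
    exact Or.inr ⟨_, hφ.forces_of_isPathArc (p := (q.1, ⟨j, by omega⟩)) ⟨rfl, hcol⟩ hqj⟩

theorem IsHContraction.dth_le (hφ : IsHContraction A φ) : dth A ≤ a + b := by
  have hcard : (Set.range fun i => φ (i, 0)).ncard ≤ a := by
    rw [← Set.image_univ]
    simpa using Set.ncard_image_le (f := fun i => φ (i, 0)) (Set.finite_univ (α := Fin a))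
  have hb : (dstep A)^[b] (Set.range fun i => φ (i, 0)) = Set.univ :=
    Set.eq_univ_of_forall fun v => by
      obtain ⟨p, rfl⟩ := hφ.surjective v
      exact hφ.image_subset_iterate_dstep b ⟨p, Nat.lt_succ_iff.1 p.2.2, rfl⟩
  calc dth A ≤ _ := dth_le_ncard_add_dpt ⟨b, hb⟩
    _ ≤ a + b := add_le_add hcard (Nat.sInf_le hb)

end HContraction

theorem stmt8_general {V : Type*} [Fintype V] (A : V → V → Prop) (hirr : Irreflexive A)
    (t : ℕ) :
    (∀ B : Set V, IsZFS A B → B.ncard + dpt A B ≤ t →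
      ObtainedFromH A B.ncard (t - B.ncard)) ∧
    (∀ a b : ℕ, 1 ≤ a → a + b = t → ObtainedFromH A a b → dth A ≤ t) := by
  refine ⟨fun B hZ hle => ?_, fun a b _ hab h => ?_⟩
  · exact obtainedFromH_iff.2 ⟨_, isHContraction_chain hirr
      (Finite.equivFinOfCardEq (Nat.card_coe_set_eq B)).symm
      (iterate_eq_univ_of_dpt_le hZ (by omega))⟩
  · obtain ⟨φ, hφ⟩ := obtainedFromH_iff.1 h
    exact hab ▸ hφ.dth_le

/-- Characterization of digraphs with throttling number at most `t`. -/
theorem stmt8 {V : Type*} [Fintype V] (A : V → V → Prop) (hirr : Irreflexive A)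
    (t : ℕ) (ht : 0 < t) :
    (∀ B : Set V, IsZFS A B → B.ncard + dpt A B ≤ t →
      ObtainedFromH A B.ncard (t - B.ncard)) ∧
    (∀ a b : ℕ, 1 ≤ a → a + b = t → ObtainedFromH A a b → dth A ≤ t) :=
  stmt8_general A hirr t
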